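/- (Cauchy's 1853 sum theorem, Robinson's reading.) Let u : ℕ → ℝ → ℝ be such that each u k is continuous on ℝ, and let s : ℕ → ℝ → ℝ be the partial sums, s n x = ∑_{k < n} u k x. Suppose that for all hypernaturals N ≤ N' with N infinite and for EVERY hyperreal X : ℝ*, the difference Filter.Germ.map₂ s N' X − Filter.Germ.map₂ s N X is infinitesimal. Then there exists a continuous function S : ℝ → ℝ such that for every real x, the partial sums s n x tend to S x as n → ∞. -/

import Mathlib

open Hyperreal Filter

/-- The hypernaturals: the ultrapower of `ℕ` by the hyperfilter on `ℕ`. -/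
abbrev Hypernat : Type := Filter.Germ (Filter.hyperfilter ℕ : Filter ℕ) ℕ

notation "ℕ*" => Hypernat

/-!
Transfer turns the hypothesis into the uniform Cauchy criterion: if it failed for some `δ`,
choosing for every `k` indices `m k, n k ≥ k` and a point `x k` with
`δ ≤ |s (m k) (x k) - s (n k) (x k)|` produces infinite hypernaturals `m, n` and a hyperreal
`x` at which the difference is not infinitesimal. The partial sums then converge uniformly,
and a uniform limit of continuous functions is continuous.
-/

set_option linter.deprecated false

theorem Hypernat.coe_lt_coe_of_tendsto {f : ℕ → ℕ} (hf : Tendsto f atTop atTop) (m : ℕ) :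
    (m : ℕ*) < (f : ℕ*) :=
  Germ.coe_lt.mpr <| Nat.hyperfilter_le_atTop (hf.eventually_gt_atTop m)

theorem Hyperreal.infinitesimal_ofSeq_iff {a : ℕ → ℝ} :
    Infinitesimal (ofSeq a) ↔ Tendsto a (hyperfilter ℕ) (nhds 0) :=
  isSt_ofSeq_iff_tendsto

theorem uniformCauchySeqOn_of_infinitesimal_sub {α : Type*} (f : ℕ → α → ℝ)
    (h : ∀ N N' : ℕ*, (∀ m : ℕ, (m : ℕ*) < N) → (∀ m : ℕ, (m : ℕ*) < N') →
      ∀ X : Germ (hyperfilter ℕ : Filter ℕ) α,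
        Infinitesimal (Germ.map₂ f N' X - Germ.map₂ f N X)) :
    UniformCauchySeqOn f atTop Set.univ := by
  rw [Metric.uniformCauchySeqOn_iff]
  by_contra! hf
  obtain ⟨δ, hδ, hf⟩ := hf
  choose m hm n hn x _ hx using hf
  have hinf := h m n (Hypernat.coe_lt_coe_of_tendsto (tendsto_atTop_mono hm tendsto_id))
    (Hypernat.coe_lt_coe_of_tendsto (tendsto_atTop_mono hn tendsto_id)) x
  have hsmall : ∀ᶠ k in hyperfilter ℕ, dist (f (n k) (x k) - f (m k) (x k)) 0 < δ :=
    Metric.tendsto_nhds.mp (infinitesimal_ofSeq_iff.mp hinf) δ hδ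
  obtain ⟨k, hk⟩ := hsmall.exists
  rw [dist_zero_right, Real.norm_eq_abs, abs_sub_comm] at hk
  exact (hx k).not_gt hk

theorem cauchy_1853_sum_theorem (u : ℕ → ℝ → ℝ) (hu : ∀ k : ℕ, Continuous (u k))
    (s : ℕ → ℝ → ℝ) (hs : ∀ n x, s n x = ∑ k ∈ Finset.range n, u k x)
    (h : ∀ N N' : ℕ*, (∀ m : ℕ, (m : ℕ*) < N) → N ≤ N' →
      ∀ X : ℝ*, Hyperreal.Infinitesimal (Filter.Germ.map₂ s N' X - Filter.Germ.map₂ s N X)) :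
    ∃ S : ℝ → ℝ, Continuous S ∧
      ∀ x : ℝ, Filter.Tendsto (fun n => s n x) Filter.atTop (nhds (S x)) := by
  have hCauchy : UniformCauchySeqOn s atTop Set.univ := by
    refine uniformCauchySeqOn_of_infinitesimal_sub s fun N N' hN hN' X => ?_
    rcases le_total N N' with hle | hle
    · exact h N N' hN hle X
    · exact neg_sub (Germ.map₂ s N X) (Germ.map₂ s N' X) ▸ (h N' N hN' hle X).neg
  choose S hS using fun x => cauchySeq_tendsto_of_complete (hCauchy.cauchySeq (Set.mem_univ x))
  have hunif : TendstoUniformly s S atTop :=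
    tendstoUniformlyOn_univ.mp (hCauchy.tendstoUniformlyOn_of_tendsto fun x _ => hS x)
  have hcont : ∀ n, Continuous (s n) := fun n =>
    (continuous_finset_sum _ fun k _ => hu k).congr fun x => (hs n x).symm
  exact ⟨S, hunif.continuous (Eventually.of_forall hcont).frequently, hS⟩
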